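/- Let u and v be coprime positive integers with (u,v) ≠ (1,1). For unit quaternions p and r, the following are equivalent: (i) the bijection q ↦ p q r⁻¹ of the unit quaternions preserves the fibration, i.e., for all unit quaternions q, q', the quaternions q and q' lie in the same orbit of the circle action w · (z₁ + z₂ j) = wᵛ z₁ + wᵘ z₂ j if and only if p q r⁻¹ and p q' r⁻¹ do; (ii) either p and r both lie in the circle subgroup S¹, or p and r both lie in S¹ j. -/

import Mathlib

open Quaternion
open scoped Quaternion

/-- The first complex coordinate of a quaternion `q = z₁ + z₂ j`. -/
def z1 (q : ℍ[ℝ]) : ℂ := ⟨q.re, q.imI⟩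

/-- The second complex coordinate of a quaternion `q = z₁ + z₂ j`. -/
def z2 (q : ℍ[ℝ]) : ℂ := ⟨q.imJ, q.imK⟩

/-- Two quaternions lie in the same orbit of the circle action
`w • (z₁ + z₂ j) = wᵛ z₁ + wᵘ z₂ j`, i.e. in the same fiber of the Seifert fibration
`z₁ + z₂ j ↦ z₁ᵘ / z₂ᵛ` of `S³`. -/
def SameFiber (u v : ℕ) (q q' : ℍ[ℝ]) : Prop :=
  ∃ w : ℂ, ‖w‖ = 1 ∧ z1 q' = w ^ v * z1 q ∧ z2 q' = w ^ u * z2 q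

/-!
Write `p = a + b j` and `r = c + d j`. The circle `S¹` is the fiber through `1`, so if
`q ↦ p q r⁻¹` preserves fibers, the great circle `ζ ↦ p ζ r⁻¹ = (a c̄ ζ + b d̄ ζ̄, b c ζ̄ - a d ζ)`
lies in a single fiber. Fibers lie on the tori where `|z₁|` and `|z₂|` are constant, which forces
each coordinate of the circle to be a multiple of `ζ` or of `ζ̄`; comparing with `(wᵛ z₁, wᵘ z₂)`
and using `u ≠ v` shows that one coordinate vanishes identically. Four configurations remain. In
two of them `q ↦ p q r⁻¹` rescales the (possibly conjugated) coordinates, which preserves fibers.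
In the other two it exchanges `z₁` and `z₂`, turning `(u, v)`-fibers into `(v, u)`-fibers, which
is impossible as `u² ≠ v²`.
-/

open ComplexConjugate

def ofCoords (a b : ℂ) : ℍ[ℝ] := ⟨a.re, a.im, b.re, b.im⟩

@[simp] lemma z1_ofCoords (a b : ℂ) : z1 (ofCoords a b) = a := rfl
@[simp] lemma z2_ofCoords (a b : ℂ) : z2 (ofCoords a b) = b := rfl

@[simp] lemma z1_coeComplex (z : ℂ) : z1 z = z := rfl
@[simp] lemma z2_coeComplex (z : ℂ) : z2 z = 0 := rfl

lemma ext_z1_z2 {q q' : ℍ[ℝ]} (h1 : z1 q = z1 q') (h2 : z2 q = z2 q') : q = q' := by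
  simp only [z1, z2, Complex.ext_iff] at h1 h2
  ext <;> tauto

lemma z1_eq_zero_iff {q : ℍ[ℝ]} : z1 q = 0 ↔ q.re = 0 ∧ q.imI = 0 := by
  simp [z1, Complex.ext_iff]

lemma z2_eq_zero_iff {q : ℍ[ℝ]} : z2 q = 0 ↔ q.imJ = 0 ∧ q.imK = 0 := by
  simp [z2, Complex.ext_iff]

lemma z1_eq_zero_and_z2_eq_zero_iff {q : ℍ[ℝ]} : z1 q = 0 ∧ z2 q = 0 ↔ q = 0 := by
  rw [z1_eq_zero_iff, z2_eq_zero_iff, Quaternion.ext_iff]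
  simp [and_assoc]

lemma norm_eq_one_iff {q : ℍ[ℝ]} : ‖q‖ = 1 ↔ ‖z1 q‖ ^ 2 + ‖z2 q‖ ^ 2 = 1 := by
  have h : ‖z1 q‖ ^ 2 + ‖z2 q‖ ^ 2 = ‖q‖ ^ 2 := by
    rw [Complex.sq_norm, Complex.sq_norm, sq, ← Quaternion.normSq_eq_norm_mul_self,
      Quaternion.normSq_def']
    simp only [Complex.normSq_apply, z1, z2]
    ring
  rw [h, pow_eq_one_iff_of_nonneg (norm_nonneg q) two_ne_zero]

@[simp] lemma z1_mul (p q : ℍ[ℝ]) : z1 (p * q) = z1 p * z1 q - z2 p * conj (z2 q) := by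
  apply Complex.ext <;> simp [z1, z2] <;> ring

@[simp] lemma z2_mul (p q : ℍ[ℝ]) : z2 (p * q) = z1 p * z2 q + z2 p * conj (z1 q) := by
  apply Complex.ext <;> simp [z1, z2] <;> ring

@[simp] lemma z1_star (q : ℍ[ℝ]) : z1 (star q) = conj (z1 q) := by
  apply Complex.ext <;> simp [z1]

@[simp] lemma z2_star (q : ℍ[ℝ]) : z2 (star q) = -z2 q := by
  apply Complex.ext <;> simp [z2]

lemma inv_eq_star_of_norm_eq_one {q : ℍ[ℝ]} (hq : ‖q‖ = 1) : q⁻¹ = star q := by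
  rw [Quaternion.inv_def, Quaternion.normSq_eq_norm_mul_self, hq, mul_one, inv_one, one_smul]

lemma exists_pow_eq_of_norm_eq_one {n : ℕ} (hn : 0 < n) {ζ : ℂ} (hζ : ‖ζ‖ = 1) :
    ∃ w : ℂ, ‖w‖ = 1 ∧ w ^ n = ζ := by
  obtain ⟨w, rfl⟩ := IsAlgClosed.exists_pow_nat_eq ζ hn
  rw [norm_pow, pow_eq_one_iff_of_nonneg (norm_nonneg w) hn.ne'] at hζ
  exact ⟨w, hζ, rfl⟩

lemma exists_norm_eq_one_zpow_ne_one {k : ℤ} (hk : k ≠ 0) : ∃ ζ : ℂ, ‖ζ‖ = 1 ∧ ζ ^ k ≠ 1 := by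
  refine ⟨Complex.exp ((Real.pi / k : ℝ) * Complex.I), Complex.norm_exp_ofReal_mul_I _, ?_⟩
  rw [← Complex.exp_int_mul, ← mul_assoc, Complex.ofReal_div, Complex.ofReal_intCast,
    mul_div_cancel₀ _ (Int.cast_ne_zero.mpr hk), Complex.exp_pi_mul_I]
  norm_num

lemma not_forall_exists_zpow_eq_pow {m n : ℤ} {u v : ℕ} (hk : m * u - n * v ≠ 0) :
    ¬ ∀ ζ : ℂ, ‖ζ‖ = 1 → ∃ w : ℂ, ζ ^ m = w ^ v ∧ ζ ^ n = w ^ u := by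
  intro h
  obtain ⟨ζ, hζ, hne⟩ := exists_norm_eq_one_zpow_ne_one hk
  obtain ⟨w, h1, h2⟩ := h ζ hζ
  have hζ0 : ζ ≠ 0 := by rintro rfl; simp at hζ
  have heq : ζ ^ (m * u) = ζ ^ (n * v) := by
    rw [zpow_mul, zpow_mul, h1, h2, zpow_natCast, zpow_natCast, ← pow_mul, ← pow_mul, mul_comm]
  exact hne (by rw [zpow_sub₀ hζ0, heq, div_self (zpow_ne_zero _ hζ0)])

lemma mul_conj_eq_zero_of_forall_norm_eq {x y : ℂ}
    (h : ∀ ω : ℂ, ‖ω‖ = 1 → ‖x * ω + y‖ = ‖x + y‖) : x * conj y = 0 := by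
  have hsq : ∀ ω : ℂ, ‖ω‖ = 1 → Complex.normSq (x * ω + y) = Complex.normSq (x + y) := by
    intro ω hω
    rw [← Complex.sq_norm, ← Complex.sq_norm, h ω hω]
  have e1 := hsq (-1) (by simp)
  have e2 := hsq Complex.I (by simp)
  simp only [Complex.normSq_apply, Complex.add_re, Complex.add_im, Complex.mul_re,
    Complex.mul_im, Complex.I_re, Complex.I_im, Complex.neg_re, Complex.neg_im,
    Complex.one_re, Complex.one_im] at e1 e2
  apply Complex.ext <;> simp only [Complex.mul_re, Complex.mul_im, Complex.conj_re,
    Complex.conj_im, Complex.zero_re, Complex.zero_im]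
  · linear_combination (-1/4 : ℝ) * e1
  · linear_combination (1/4 : ℝ) * e1 - (1/2 : ℝ) * e2

lemma eq_zero_or_eq_zero_of_forall_norm_eq {x y : ℂ}
    (h : ∀ ζ : ℂ, ‖ζ‖ = 1 → ‖x * ζ + y * conj ζ‖ = ‖x + y‖) : x = 0 ∨ y = 0 := by
  have h' : ∀ ω : ℂ, ‖ω‖ = 1 → ‖x * ω + y‖ = ‖x + y‖ := by
    intro ω hω
    obtain ⟨ζ, hζ, rfl⟩ := exists_pow_eq_of_norm_eq_one two_pos hω
    have hζζ : ζ * conj ζ = 1 := by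
      rw [Complex.mul_conj, Complex.normSq_eq_norm_sq, hζ, one_pow, Complex.ofReal_one]
    calc ‖x * ζ ^ 2 + y‖ = ‖ζ * (x * ζ + y * conj ζ)‖ := by
          rw [mul_add, mul_left_comm ζ y, hζζ]; congr 1; ring
      _ = ‖x + y‖ := by rw [norm_mul, hζ, one_mul, h ζ hζ]
  simpa using mul_conj_eq_zero_of_forall_norm_eq h'

lemma exists_zpow_of_eq_zero_or_eq_zero {x y : ℂ} (h : x = 0 ∨ y = 0) :
    ∃ m : ℤ, (m = 1 ∨ m = -1) ∧
      ∀ ζ : ℂ, ‖ζ‖ = 1 → x * ζ + y * conj ζ = (x + y) * ζ ^ m := by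
  rcases h with rfl | rfl
  · refine ⟨-1, Or.inr rfl, fun ζ hζ => ?_⟩
    rw [zpow_neg_one, Complex.inv_eq_conj hζ]; ring
  · exact ⟨1, Or.inl rfl, fun ζ _ => by simp⟩

lemma eq_zero_and_eq_zero_of_forall_exists_pow {u v : ℕ} (huv : u ≠ v) {α β γ δ : ℂ}
    (h : ∀ ζ : ℂ, ‖ζ‖ = 1 → ∃ w : ℂ, ‖w‖ = 1 ∧
      α * ζ + β * conj ζ = w ^ v * (α + β) ∧ γ * ζ + δ * conj ζ = w ^ u * (γ + δ)) :
    (α = 0 ∧ β = 0) ∨ (γ = 0 ∧ δ = 0) := by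
  have hαβ : α = 0 ∨ β = 0 := eq_zero_or_eq_zero_of_forall_norm_eq fun ζ hζ => by
    obtain ⟨w, hw, h1, -⟩ := h ζ hζ
    rw [h1, norm_mul, norm_pow, hw, one_pow, one_mul]
  have hγδ : γ = 0 ∨ δ = 0 := eq_zero_or_eq_zero_of_forall_norm_eq fun ζ hζ => by
    obtain ⟨w, hw, -, h2⟩ := h ζ hζ
    rw [h2, norm_mul, norm_pow, hw, one_pow, one_mul]
  obtain ⟨m, hm, hαβ'⟩ := exists_zpow_of_eq_zero_or_eq_zero hαβ
  obtain ⟨n, hn, hγδ'⟩ := exists_zpow_of_eq_zero_or_eq_zero hγδ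
  by_contra hne
  have hsum₁ : α + β ≠ 0 := fun h0 => hne (Or.inl (by rcases hαβ with rfl | rfl <;> simp_all))
  have hsum₂ : γ + δ ≠ 0 := fun h0 => hne (Or.inr (by rcases hγδ with rfl | rfl <;> simp_all))
  refine not_forall_exists_zpow_eq_pow (m := m) (n := n) (u := u) (v := v) ?_ fun ζ hζ => ?_
  · rcases hm with rfl | rfl <;> rcases hn with rfl | rfl <;> omega
  · obtain ⟨w, -, h1, h2⟩ := h ζ hζ
    rw [hαβ' ζ hζ, mul_comm (w ^ v)] at h1
    rw [hγδ' ζ hζ, mul_comm (w ^ u)] at h2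
    exact ⟨w, mul_left_cancel₀ hsum₁ h1, mul_left_cancel₀ hsum₂ h2⟩

def diagCoords (κ μ : ℂ) (q : ℍ[ℝ]) : ℍ[ℝ] := ofCoords (κ * z1 q) (μ * z2 q)

def conjCoords (q : ℍ[ℝ]) : ℍ[ℝ] := ofCoords (conj (z1 q)) (conj (z2 q))

def swapCoords (q : ℍ[ℝ]) : ℍ[ℝ] := ofCoords (z2 q) (z1 q)

def PreservesFibers (u v : ℕ) (f : ℍ[ℝ] → ℍ[ℝ]) : Prop :=
  ∀ q q' : ℍ[ℝ], ‖q‖ = 1 → ‖q'‖ = 1 → SameFiber u v q q' → SameFiber u v (f q) (f q')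

section Fibers

variable {u v : ℕ}

lemma sameFiber_diagCoords_iff {κ μ : ℂ} (hκ : κ ≠ 0) (hμ : μ ≠ 0) {q q' : ℍ[ℝ]} :
    SameFiber u v (diagCoords κ μ q) (diagCoords κ μ q') ↔ SameFiber u v q q' := by
  simp only [SameFiber, diagCoords, z1_ofCoords, z2_ofCoords, mul_left_comm _ κ,
    mul_left_comm _ μ, mul_right_inj' hκ, mul_right_inj' hμ]

lemma SameFiber.conjCoords {q q' : ℍ[ℝ]} (h : SameFiber u v q q') :
    SameFiber u v (conjCoords q) (conjCoords q') := by
  obtain ⟨w, hw, h1, h2⟩ := h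
  exact ⟨conj w, by rw [Complex.norm_conj, hw], by simp [_root_.conjCoords, h1],
    by simp [_root_.conjCoords, h2]⟩

@[simp] lemma conjCoords_conjCoords (q : ℍ[ℝ]) : conjCoords (conjCoords q) = q :=
  ext_z1_z2 (by simp [conjCoords]) (by simp [conjCoords])

lemma sameFiber_conjCoords_iff {q q' : ℍ[ℝ]} :
    SameFiber u v (conjCoords q) (conjCoords q') ↔ SameFiber u v q q' :=
  ⟨fun h => by simpa using h.conjCoords, SameFiber.conjCoords⟩

lemma norm_conjCoords_eq_one_iff {q : ℍ[ℝ]} : ‖conjCoords q‖ = 1 ↔ ‖q‖ = 1 := by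
  rw [norm_eq_one_iff, norm_eq_one_iff]
  simp [conjCoords]

lemma PreservesFibers.comp_conjCoords {f : ℍ[ℝ] → ℍ[ℝ]} (hf : PreservesFibers u v f) :
    PreservesFibers u v (f ∘ conjCoords) := fun _ _ hq hq' h =>
  hf _ _ (norm_conjCoords_eq_one_iff.mpr hq) (norm_conjCoords_eq_one_iff.mpr hq')
    (sameFiber_conjCoords_iff.mpr h)

lemma not_preservesFibers_diagCoords_swapCoords (huv : u ≠ v) {κ μ : ℂ} (hκ : κ ≠ 0)
    (hμ : μ ≠ 0) : ¬ PreservesFibers u v (diagCoords κ μ ∘ swapCoords) := by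
  intro hf
  have hk : (u : ℤ) * u - v * v ≠ 0 := by
    rw [sub_ne_zero]
    exact_mod_cast mt Nat.mul_self_inj.mp huv
  refine not_forall_exists_zpow_eq_pow hk fun ζ hζ => ?_
  have hfib := hf (ofCoords (3 / 5) (4 / 5)) (ofCoords (ζ ^ v * (3 / 5)) (ζ ^ u * (4 / 5)))
    (by rw [norm_eq_one_iff]; norm_num) (by rw [norm_eq_one_iff]; norm_num [hζ])
    ⟨ζ, hζ, rfl, rfl⟩
  rw [Function.comp_apply, Function.comp_apply, sameFiber_diagCoords_iff hκ hμ] at hfib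
  obtain ⟨w, -, h1, h2⟩ := hfib
  simp only [swapCoords, z1_ofCoords, z2_ofCoords] at h1 h2
  exact ⟨w, mul_right_cancel₀ (by norm_num) h1, mul_right_cancel₀ (by norm_num) h2⟩

end Fibers

section LeftRightMultiplication

variable {p r : ℍ[ℝ]}

lemma z1_mul_coeComplex_mul_star (p r : ℍ[ℝ]) (ζ : ℂ) :
    z1 (p * ζ * star r) = z1 p * conj (z1 r) * ζ + z2 p * conj (z2 r) * conj ζ := by
  simp; ring

lemma z2_mul_coeComplex_mul_star (p r : ℍ[ℝ]) (ζ : ℂ) :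
    z2 (p * ζ * star r) = -(z1 p * z2 r) * ζ + z2 p * z1 r * conj ζ := by
  simp; ring

lemma mul_mul_star_eq_diagCoords (hp : z2 p = 0) (hr : z2 r = 0) (q : ℍ[ℝ]) :
    p * q * star r = diagCoords (z1 p * conj (z1 r)) (z1 p * z1 r) q := by
  apply ext_z1_z2 <;> simp [diagCoords, hp, hr] <;> ring

lemma mul_mul_star_eq_diagCoords_conjCoords (hp : z1 p = 0) (hr : z1 r = 0) (q : ℍ[ℝ]) :
    p * q * star r = diagCoords (z2 p * conj (z2 r)) (z2 p * z2 r) (conjCoords q) := by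
  apply ext_z1_z2 <;> simp [diagCoords, conjCoords, hp, hr] <;> ring

lemma mul_mul_star_eq_diagCoords_swapCoords (hp : z2 p = 0) (hr : z1 r = 0) (q : ℍ[ℝ]) :
    p * q * star r = diagCoords (z1 p * conj (z2 r)) (-(z1 p * z2 r)) (swapCoords q) := by
  apply ext_z1_z2 <;> simp [diagCoords, swapCoords, hp, hr] <;> ring

lemma mul_mul_star_eq_diagCoords_swapCoords_conjCoords (hp : z1 p = 0) (hr : z2 r = 0)
    (q : ℍ[ℝ]) : p * q * star r =
      diagCoords (-(z2 p * conj (z1 r))) (z2 p * z1 r) (swapCoords (conjCoords q)) := by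
  apply ext_z1_z2 <;> simp [diagCoords, swapCoords, conjCoords, hp, hr] <;> ring

lemma sameFiber_mul_mul_star_iff {u v : ℕ} (hp : p ≠ 0) (hr : r ≠ 0)
    (h : (z2 p = 0 ∧ z2 r = 0) ∨ (z1 p = 0 ∧ z1 r = 0)) (q q' : ℍ[ℝ]) :
    SameFiber u v (p * q * star r) (p * q' * star r) ↔ SameFiber u v q q' := by
  rw [Ne, ← z1_eq_zero_and_z2_eq_zero_iff] at hp hr
  rcases h with ⟨hp2, hr2⟩ | ⟨hp1, hr1⟩
  · have hp1 : z1 p ≠ 0 := fun h => hp ⟨h, hp2⟩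
    have hr1 : z1 r ≠ 0 := fun h => hr ⟨h, hr2⟩
    rw [mul_mul_star_eq_diagCoords hp2 hr2, mul_mul_star_eq_diagCoords hp2 hr2,
      sameFiber_diagCoords_iff (by simp [hp1, hr1]) (by simp [hp1, hr1])]
  · have hp2 : z2 p ≠ 0 := fun h => hp ⟨hp1, h⟩
    have hr2 : z2 r ≠ 0 := fun h => hr ⟨hr1, h⟩
    rw [mul_mul_star_eq_diagCoords_conjCoords hp1 hr1,
      mul_mul_star_eq_diagCoords_conjCoords hp1 hr1,
      sameFiber_diagCoords_iff (by simp [hp2, hr2]) (by simp [hp2, hr2]),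
      sameFiber_conjCoords_iff]

lemma PreservesFibers.exists_pow_circle {u v : ℕ} (hv : 0 < v)
    (H : PreservesFibers u v (fun q => p * q * star r)) {ζ : ℂ} (hζ : ‖ζ‖ = 1) :
    ∃ w : ℂ, ‖w‖ = 1 ∧
      z1 p * conj (z1 r) * ζ + z2 p * conj (z2 r) * conj ζ =
        w ^ v * (z1 p * conj (z1 r) + z2 p * conj (z2 r)) ∧
      -(z1 p * z2 r) * ζ + z2 p * z1 r * conj ζ = w ^ u * (-(z1 p * z2 r) + z2 p * z1 r) := by
  obtain ⟨t, ht, rfl⟩ := exists_pow_eq_of_norm_eq_one hv hζ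
  have hunit : ∀ z : ℂ, ‖z‖ = 1 → ‖(z : ℍ[ℝ])‖ = 1 := fun z hz => by
    simp [norm_eq_one_iff, hz]
  obtain ⟨w, hw, h1, h2⟩ := H (1 : ℂ) (t ^ v : ℂ) (hunit 1 (by simp)) (hunit _ hζ)
    ⟨t, ht, by rw [z1_coeComplex, z1_coeComplex, mul_one],
      by rw [z2_coeComplex, z2_coeComplex, mul_zero]⟩
  refine ⟨w, hw, ?_, ?_⟩
  · simpa only [z1_mul_coeComplex_mul_star, map_one, mul_one] using h1
  · simpa only [z2_mul_coeComplex_mul_star, map_one, mul_one] using h2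

lemma not_preservesFibers_mul_mul_star_of_swap {u v : ℕ} (huv : u ≠ v) (hp : p ≠ 0)
    (hr : r ≠ 0) (h : (z1 p = 0 ∧ z2 r = 0) ∨ (z2 p = 0 ∧ z1 r = 0)) :
    ¬ PreservesFibers u v (fun q => p * q * star r) := by
  intro H
  rw [Ne, ← z1_eq_zero_and_z2_eq_zero_iff] at hp hr
  rcases h with ⟨hp1, hr2⟩ | ⟨hp2, hr1⟩
  · have hp2 : z2 p ≠ 0 := fun h => hp ⟨hp1, h⟩
    have hr1 : z1 r ≠ 0 := fun h => hr ⟨h, hr2⟩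
    have hL : (fun q => p * q * star r) ∘ conjCoords =
        diagCoords (-(z2 p * conj (z1 r))) (z2 p * z1 r) ∘ swapCoords := by
      funext q
      rw [Function.comp_apply, Function.comp_apply,
        mul_mul_star_eq_diagCoords_swapCoords_conjCoords hp1 hr2, conjCoords_conjCoords]
    exact not_preservesFibers_diagCoords_swapCoords huv (by simp [hp2, hr1])
      (by simp [hp2, hr1]) (hL ▸ H.comp_conjCoords)
  · have hp1 : z1 p ≠ 0 := fun h => hp ⟨h, hp2⟩
    have hr2 : z2 r ≠ 0 := fun h => hr ⟨hr1, h⟩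
    have hL : (fun q => p * q * star r) =
        diagCoords (z1 p * conj (z2 r)) (-(z1 p * z2 r)) ∘ swapCoords :=
      funext (mul_mul_star_eq_diagCoords_swapCoords hp2 hr1)
    exact not_preservesFibers_diagCoords_swapCoords huv (by simp [hp1, hr2])
      (by simp [hp1, hr2]) (hL ▸ H)

theorem coords_eq_zero_of_preservesFibers {u v : ℕ} (huv : u ≠ v) (hv : 0 < v) (hp : p ≠ 0)
    (hr : r ≠ 0) (H : PreservesFibers u v (fun q => p * q * star r)) :
    (z2 p = 0 ∧ z2 r = 0) ∨ (z1 p = 0 ∧ z1 r = 0) := by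
  have hswap := not_preservesFibers_mul_mul_star_of_swap huv hp hr
  rw [Ne, ← z1_eq_zero_and_z2_eq_zero_iff] at hp hr
  rcases eq_zero_and_eq_zero_of_forall_exists_pow huv fun ζ hζ => H.exists_pow_circle hv hζ
    with ⟨h1, h2⟩ | ⟨h1, h2⟩
  · simp only [mul_eq_zero, map_eq_zero] at h1 h2
    tauto
  · simp only [neg_eq_zero, mul_eq_zero] at h1 h2
    tauto

end LeftRightMultiplication

theorem stmt8_general (u v : ℕ) (hv : 0 < v) (huv : Nat.Coprime u v)
    (hne : ¬(u = 1 ∧ v = 1)) (p r : ℍ[ℝ]) (hp : ‖p‖ = 1) (hr : ‖r‖ = 1) :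
    (∀ q q' : ℍ[ℝ], ‖q‖ = 1 → ‖q'‖ = 1 →
        (SameFiber u v q q' ↔ SameFiber u v (p * q * r⁻¹) (p * q' * r⁻¹)))
      ↔ ((p.imJ = 0 ∧ p.imK = 0 ∧ r.imJ = 0 ∧ r.imK = 0) ∨
          (p.re = 0 ∧ p.imI = 0 ∧ r.re = 0 ∧ r.imI = 0)) := by
  have huv' : u ≠ v := by
    rintro rfl
    exact hne ⟨(Nat.coprime_self u).mp huv, (Nat.coprime_self u).mp huv⟩
  have hp0 : p ≠ 0 := norm_ne_zero_iff.mp (by rw [hp]; exact one_ne_zero)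
  have hr0 : r ≠ 0 := norm_ne_zero_iff.mp (by rw [hr]; exact one_ne_zero)
  have hcoords : ((p.imJ = 0 ∧ p.imK = 0 ∧ r.imJ = 0 ∧ r.imK = 0) ∨
      (p.re = 0 ∧ p.imI = 0 ∧ r.re = 0 ∧ r.imI = 0)) ↔
      (z2 p = 0 ∧ z2 r = 0) ∨ (z1 p = 0 ∧ z1 r = 0) := by
    simp only [z1_eq_zero_iff, z2_eq_zero_iff, and_assoc]
  rw [hcoords, inv_eq_star_of_norm_eq_one hr]
  constructor
  · intro H
    exact coords_eq_zero_of_preservesFibers huv' hv hp0 hr0 fun q q' hq hq' => (H q q' hq hq').mp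
  · intro h q q' _ _
    exact (sameFiber_mul_mul_star_iff hp0 hr0 h q q').symm

/-- Let `u, v` be coprime positive integers with `(u,v) ≠ (1,1)`. For unit quaternions `p`
and `r`, the map `q ↦ p q r⁻¹` preserves the fibration `z₁ + z₂ j ↦ z₁ᵘ / z₂ᵛ` if and only
if `p` and `r` both lie in `S¹`, or both lie in `S¹ j`. -/
theorem stmt8 (u v : ℕ) (hu : 0 < u) (hv : 0 < v) (huv : Nat.Coprime u v)
    (hne : ¬(u = 1 ∧ v = 1)) (p r : ℍ[ℝ]) (hp : ‖p‖ = 1) (hr : ‖r‖ = 1) :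
    (∀ q q' : ℍ[ℝ], ‖q‖ = 1 → ‖q'‖ = 1 →
        (SameFiber u v q q' ↔ SameFiber u v (p * q * r⁻¹) (p * q' * r⁻¹)))
      ↔ ((p.imJ = 0 ∧ p.imK = 0 ∧ r.imJ = 0 ∧ r.imK = 0) ∨
          (p.re = 0 ∧ p.imI = 0 ∧ r.re = 0 ∧ r.imI = 0)) :=
  stmt8_general u v hv huv hne p r hp hr
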